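/- arXiv:2309.01321 — 4 statements merged into one kernel-verified Lean document; each statement's English description precedes it below -/
import Mathlib

section
/- Let M, D, L be real symmetric n×n matrices with M positive definite, and let λ be a nonreal quadratic eigenvalue, i.e., (λ²M + λD + L)ν = 0 with ν ≠ 0 and Im(λ) ≠ 0. If D − 2βM is positive semidefinite for some β > 0, then Re(λ) ≤ −β. -/
open Matrix Complex

lemma dot_symm {n : ℕ} (A : Matrix (Fin n) (Fin n) ℝ) (hA : A.IsSymm) (u v : Fin n → ℝ) :
    u ⬝ᵥ A.mulVec v = v ⬝ᵥ A.mulVec u := by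
  rw [dotProduct_mulVec, ← Matrix.mulVec_transpose, hA.eq, dotProduct_comm]

lemma quad_re {n : ℕ} (A : Matrix (Fin n) (Fin n) ℝ) (x : Fin n → ℂ) :
    (star x ⬝ᵥ (A.map Complex.ofReal).mulVec x).re =
      (fun i => (x i).re) ⬝ᵥ A.mulVec (fun i => (x i).re)
      + (fun i => (x i).im) ⬝ᵥ A.mulVec (fun i => (x i).im) := by
  simp only [dotProduct, mulVec, Matrix.map_apply, Pi.star_apply, Complex.re_sum,
    Finset.mul_sum, ← Finset.sum_add_distrib]
  congr 1; ext i; congr 1; ext j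
  simp [Complex.mul_re, Complex.mul_im]

lemma quad_im {n : ℕ} (A : Matrix (Fin n) (Fin n) ℝ) (hA : A.IsSymm) (x : Fin n → ℂ) :
    (star x ⬝ᵥ (A.map Complex.ofReal).mulVec x).im = 0 := by
  have key : (star x ⬝ᵥ (A.map Complex.ofReal).mulVec x).im =
      (fun i => (x i).re) ⬝ᵥ A.mulVec (fun i => (x i).im)
      - (fun i => (x i).im) ⬝ᵥ A.mulVec (fun i => (x i).re) := by
    simp only [dotProduct, mulVec, Matrix.map_apply, Pi.star_apply, Complex.im_sum,
      Finset.mul_sum, ← Finset.sum_sub_distrib]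
    congr 1; ext i; congr 1; ext j
    simp [Complex.mul_re, Complex.mul_im]
    ring
  rw [key, dot_symm A hA, sub_self]

theorem stmt_5 {n : ℕ} (M D L : Matrix (Fin n) (Fin n) ℝ)
    (hM : M.IsSymm) (hD : D.IsSymm) (hL : L.IsSymm) (hMpd : M.PosDef)
    (β : ℝ) (hβ : 0 < β) (hDM : (D - (2 * β) • M).PosSemidef)
    (lam : ℂ) (hlam : lam.im ≠ 0) (ν : Fin n → ℂ) (hν : ν ≠ 0)
    (hqep : (lam ^ 2 • M.map (Complex.ofReal) + lam • D.map (Complex.ofReal)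
        + L.map (Complex.ofReal)).mulVec ν = 0) :
    lam.re ≤ -β := by
  set a := star ν ⬝ᵥ (M.map Complex.ofReal).mulVec ν with ha_def
  set b := star ν ⬝ᵥ (D.map Complex.ofReal).mulVec ν with hb_def
  set c := star ν ⬝ᵥ (L.map Complex.ofReal).mulVec ν with hc_def
  have heq : lam ^ 2 * a + lam * b + c = 0 := by
    have h0 : star ν ⬝ᵥ ((lam ^ 2 • M.map (Complex.ofReal) + lam • D.map (Complex.ofReal)
        + L.map (Complex.ofReal)).mulVec ν) = 0 := by rw [hqep, dotProduct_zero]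
    simpa [add_mulVec, smul_mulVec, dotProduct_add, dotProduct_smul, smul_eq_mul,
      ha_def, hb_def, hc_def, mul_add, add_assoc] using h0
  set xr : Fin n → ℝ := fun i => (ν i).re with hxr
  set xi : Fin n → ℝ := fun i => (ν i).im with hxi
  -- real parts of quadratic forms
  have har : a.re = xr ⬝ᵥ M.mulVec xr + xi ⬝ᵥ M.mulVec xi := quad_re M ν
  have hbr : b.re = xr ⬝ᵥ D.mulVec xr + xi ⬝ᵥ D.mulVec xi := quad_re D ν
  have hai : a.im = 0 := quad_im M hM ν
  have hbi : b.im = 0 := quad_im D hD ν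
  have hci : c.im = 0 := quad_im L hL ν
  -- positivity of a.re
  have hre_pos : ∀ x : Fin n → ℝ, x ≠ 0 → 0 < x ⬝ᵥ M.mulVec x := by
    intro x hx
    simpa using hMpd.re_dotProduct_pos (𝕜 := ℝ) hx
  have hre_nonneg : ∀ x : Fin n → ℝ, 0 ≤ x ⬝ᵥ M.mulVec x := by
    intro x
    simpa using hMpd.posSemidef.re_dotProduct_nonneg (𝕜 := ℝ) x
  have hxne : xr ≠ 0 ∨ xi ≠ 0 := by
    by_contra h
    push_neg at h
    apply hν
    funext i
    have h1 := congrFun h.1 i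
    have h2 := congrFun h.2 i
    simp [hxr, hxi] at h1 h2
    exact Complex.ext h1 h2
  have hapos : 0 < a.re := by
    rw [har]
    rcases hxne with h | h
    · have := hre_pos xr h
      have := hre_nonneg xi
      linarith
    · have := hre_pos xi h
      have := hre_nonneg xr
      linarith
  -- b.re ≥ 2β a.re
  have hsemi : ∀ x : Fin n → ℝ, 2 * β * (x ⬝ᵥ M.mulVec x) ≤ x ⬝ᵥ D.mulVec x := by
    intro x
    have := hDM.re_dotProduct_nonneg (𝕜 := ℝ) x
    simp [sub_mulVec, smul_mulVec, dotProduct_sub, dotProduct_smul, smul_eq_mul] at this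
    linarith
  have hbge : 2 * β * a.re ≤ b.re := by
    rw [har, hbr]
    have h1 := hsemi xr
    have h2 := hsemi xi
    linarith
  -- imaginary part of the quadratic equation
  have him := congrArg Complex.im heq
  simp only [Complex.add_im, Complex.mul_im, hai, hbi, hci, Complex.zero_im, mul_zero,
    add_zero, zero_add] at him
  have hsq : (lam ^ 2).im = 2 * lam.re * lam.im := by
    simp [pow_two, Complex.mul_im]; ring
  rw [hsq] at him
  -- him : 2 * lam.re * lam.im * a.re + lam.im * b.re = 0
  have hfac : lam.im * (2 * lam.re * a.re + b.re) = 0 := by linarith [him]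
  have hkey : 2 * lam.re * a.re + b.re = 0 := by
    rcases mul_eq_zero.mp hfac with h | h
    · exact absurd h hlam
    · exact h
  nlinarith [hapos, hbge, hkey]
end

section
/- Let M ≻ 0, D ⪰ 0, L ⪰ 0 be real symmetric n×n matrices and ζ ∈ [0, π/2). A complex quadratic eigenvalue pair λ, λ* of (λ²M + λD + L)ν = 0 satisfies sin ζ · Re(λ) + cos ζ · |Im(λ)| ≤ 0 if and only if ⟨ν, Dν⟩² − 4(cos ζ)² ⟨ν, Lν⟩⟨ν, Mν⟩ ≥ 0, where ν is the corresponding eigenvector. -/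
/-!
Pairing the eigen-equation with `ν` turns it into the real quadratic `m λ² + d λ + l = 0` with
`m = ⟨ν, Mν⟩ > 0` and `d, l ≥ 0`, because a real positive (semi)definite matrix stays so over `ℂ`.
A real root is nonpositive, and then both sides hold. For a non-real root, Vieta for the pair
`λ, λ*` gives `d = -2 m Re λ` and `l = m |λ|²`, so the discriminant `d² - 4 cos² ζ l m` equals
`4 m² (sin² ζ Re(λ)² - cos² ζ Im(λ)²)`, whose sign is that of the sector condition.
-/

open Matrix Complex Real

open scoped MatrixOrder ComplexOrder

namespace Matrix

variable {n 𝕜 : Type*} [Fintype n] [RCLike 𝕜]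

theorem IsHermitian.coe_re_star_dotProduct_mulVec_self {A : Matrix n n 𝕜} (hA : A.IsHermitian)
    (x : n → 𝕜) : (RCLike.re (star x ⬝ᵥ A *ᵥ x) : 𝕜) = star x ⬝ᵥ A *ᵥ x :=
  RCLike.conj_eq_iff_re.mp (RCLike.conj_eq_iff_im.mpr (hA.im_star_dotProduct_mulVec_self x))

theorem PosSemidef.map_ofReal {A : Matrix n n ℝ} (hA : A.PosSemidef) :
    (A.map (RCLike.ofReal : ℝ → 𝕜)).PosSemidef := by
  classical
  obtain ⟨B, rfl⟩ : ∃ B, A = Bᴴ * B := ⟨CFC.sqrt A, by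
    rw [← star_eq_conjTranspose, (CFC.sqrt_nonneg A).isSelfAdjoint.star_eq,
      CFC.sqrt_mul_sqrt_self A hA.nonneg]⟩
  rw [Matrix.map_mul, conjTranspose_map _ fun _ => (RCLike.conj_ofReal _).symm]
  exact posSemidef_conjTranspose_mul_self _

theorem PosDef.map_ofReal {A : Matrix n n ℝ} (hA : A.PosDef) :
    (A.map (RCLike.ofReal : ℝ → 𝕜)).PosDef := by
  classical
  refine hA.posSemidef.map_ofReal.posDef_iff_isUnit.mpr ?_
  have hdet := (algebraMap ℝ 𝕜).map_det A
  simp only [RingHom.mapMatrix_apply, RCLike.algebraMap_eq_ofReal] at hdet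
  rw [isUnit_iff_isUnit_det, isUnit_iff_ne_zero, ← hdet, RCLike.ofReal_ne_zero]
  exact hA.det_pos.ne'

end Matrix

section QuadraticRoots

variable {m d l : ℝ} {z : ℂ}

theorem Complex.quadratic_eq_zero_re_im (hz : z ^ 2 * m + z * d + l = 0) :
    (z.re ^ 2 - z.im ^ 2) * m + z.re * d + l = 0 ∧ z.im * (2 * z.re * m + d) = 0 := by
  have hre := congrArg Complex.re hz
  have him := congrArg Complex.im hz
  simp only [pow_two, add_re, add_im, mul_re, mul_im, ofReal_re, ofReal_im, zero_re,
    zero_im] at hre him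
  constructor
  · linear_combination hre
  · linear_combination him

theorem Complex.re_nonpos_of_quadratic_eq_zero (hm : 0 < m) (hd : 0 ≤ d) (hl : 0 ≤ l)
    (hz : z ^ 2 * m + z * d + l = 0) : z.re ≤ 0 := by
  obtain ⟨hre, him⟩ := quadratic_eq_zero_re_im hz
  rcases eq_or_ne z.im 0 with hy | hy
  · rw [hy] at hre
    by_contra! hpos
    nlinarith [mul_pos (mul_pos hpos hpos) hm, mul_nonneg hpos.le hd]
  · nlinarith [(mul_eq_zero.mp him).resolve_left hy]

theorem mul_add_mul_abs_nonpos_iff_sq_le {s c x y : ℝ} (hs : 0 ≤ s) (hc : 0 ≤ c) (hx : x ≤ 0) :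
    s * x + c * |y| ≤ 0 ↔ c ^ 2 * y ^ 2 ≤ s ^ 2 * x ^ 2 := by
  rw [← le_neg_iff_add_nonpos_left,
    ← pow_le_pow_iff_left₀ (by positivity) (by nlinarith) two_ne_zero, mul_pow, neg_sq,
    mul_pow, sq_abs]

theorem Complex.sector_iff_discriminant_nonneg {s c : ℝ} (hm : 0 < m) (hd : 0 ≤ d)
    (hl : 0 ≤ l) (hs : 0 ≤ s) (hc : 0 ≤ c) (hsc : s ^ 2 + c ^ 2 = 1)
    (hz : z ^ 2 * m + z * d + l = 0) :
    s * z.re + c * |z.im| ≤ 0 ↔ 0 ≤ d ^ 2 - 4 * c ^ 2 * l * m := by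
  obtain ⟨hre, him⟩ := quadratic_eq_zero_re_im hz
  have hx := re_nonpos_of_quadratic_eq_zero hm hd hl hz
  rcases eq_or_ne z.im 0 with hy | hy
  · have hdisc : d ^ 2 - 4 * c ^ 2 * l * m = (2 * m * z.re + d) ^ 2 + 4 * s ^ 2 * l * m := by
      rw [hy] at hre
      linear_combination (-4 * m) * hre - 4 * l * m * hsc
    rw [hy, abs_zero, mul_zero, add_zero, hdisc]
    exact iff_of_true (mul_nonpos_of_nonneg_of_nonpos hs hx) (by positivity)
  · have hd' : d = -2 * z.re * m := by
      linear_combination (mul_eq_zero.mp him).resolve_left hy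
    have hdisc : d ^ 2 - 4 * c ^ 2 * l * m
        = 4 * m ^ 2 * (s ^ 2 * z.re ^ 2 - c ^ 2 * z.im ^ 2) := by
      subst hd'
      linear_combination (-4 * c ^ 2 * m) * hre - 4 * m ^ 2 * z.re ^ 2 * hsc
    rw [mul_add_mul_abs_nonpos_iff_sq_le hs hc hx, hdisc, mul_nonneg_iff_of_pos_left (by positivity), sub_nonneg]

end QuadraticRoots

theorem stmt_6 {n : ℕ} (M D L : Matrix (Fin n) (Fin n) ℝ)
    (hM : M.PosDef) (hD : D.PosSemidef) (hL : L.PosSemidef)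
    (ζ : ℝ) (hζ0 : 0 ≤ ζ) (hζ1 : ζ < Real.pi / 2)
    (lam : ℂ) (ν : Fin n → ℂ) (hν : ν ≠ 0)
    (hqep : (lam ^ 2 • M.map (Complex.ofReal) + lam • D.map (Complex.ofReal)
        + L.map (Complex.ofReal)).mulVec ν = 0) :
    Real.sin ζ * lam.re + Real.cos ζ * |lam.im| ≤ 0 ↔
      (star ν ⬝ᵥ (D.map (Complex.ofReal)).mulVec ν).re ^ 2
        - 4 * Real.cos ζ ^ 2 * (star ν ⬝ᵥ (L.map (Complex.ofReal)).mulVec ν).re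
          * (star ν ⬝ᵥ (M.map (Complex.ofReal)).mulVec ν).re ≥ 0 := by
  have hMc : (M.map Complex.ofReal).PosDef := hM.map_ofReal
  have hDc : (D.map Complex.ofReal).PosSemidef := hD.map_ofReal
  have hLc : (L.map Complex.ofReal).PosSemidef := hL.map_ofReal
  have hz : lam ^ 2 * ((star ν ⬝ᵥ (M.map Complex.ofReal) *ᵥ ν).re : ℂ)
      + lam * ((star ν ⬝ᵥ (D.map Complex.ofReal) *ᵥ ν).re : ℂ)
      + ((star ν ⬝ᵥ (L.map Complex.ofReal) *ᵥ ν).re : ℂ) = 0 := by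
    have h := congrArg (star ν ⬝ᵥ ·) hqep
    simp only [add_mulVec, smul_mulVec, dotProduct_add, dotProduct_smul, smul_eq_mul,
      dotProduct_zero] at h
    rwa [← hMc.isHermitian.coe_re_star_dotProduct_mulVec_self,
      ← hDc.isHermitian.coe_re_star_dotProduct_mulVec_self,
      ← hLc.isHermitian.coe_re_star_dotProduct_mulVec_self] at h
  exact sector_iff_discriminant_nonneg (hMc.re_dotProduct_pos hν) (hDc.re_dotProduct_nonneg ν)
    (hLc.re_dotProduct_nonneg ν) (sin_nonneg_of_nonneg_of_le_pi hζ0 (by linarith [pi_pos]))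
    (cos_nonneg_of_mem_Icc ⟨by linarith [pi_pos], hζ1.le⟩) (sin_sq_add_cos_sq ζ) hz
end

section
/- Let M ≻ 0, D, L be real symmetric n×n matrices, β > 0, ζ ∈ [0, π/2), and suppose (i) D − 2βM ⪰ 0, (ii) L ⪰ 0, and (iii) βD − 2(cos ζ)²L ⪰ 0. Then for every quadratic eigenvalue λ with eigenvector ν of (λ²M + λD + L)ν = 0, the inequality ⟨ν, Dν⟩² − 4(cos ζ)²⟨ν, Lν⟩⟨ν, Mν⟩ ≥ 0 holds. -/
open Matrix Complex

/-! Writing `d`, `l`, `m` for the real parts of `νᴴ D ν`, `νᴴ L ν`, `νᴴ M ν`, the semidefiniteness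
hypotheses give `d ≥ 2βm ≥ 0` and `βd ≥ 2 cos² ζ · l`, hence `d² ≥ 2βm · d ≥ 4 cos² ζ · l · m`. -/

namespace Matrix

variable {n : Type*} [Fintype n]

def reQuadForm (v : n → ℂ) : Matrix n n ℝ →ₗ[ℝ] ℝ where
  toFun A := (star v ⬝ᵥ (A.map ofReal) *ᵥ v).re
  map_add' A B := by
    simp only [Matrix.map_add ofReal ofReal_add, add_mulVec, dotProduct_add, add_re]
  map_smul' c A := by
    rw [Matrix.map_smul ofReal c fun a ↦ by rw [smul_eq_mul, ofReal_mul, real_smul]]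
    simp only [smul_mulVec, dotProduct_smul, RingHom.id_apply, smul_re]

theorem reQuadForm_eq (v : n → ℂ) (A : Matrix n n ℝ) :
    reQuadForm v A = (fun i ↦ (v i).re) ⬝ᵥ A *ᵥ (fun i ↦ (v i).re)
      + (fun i ↦ (v i).im) ⬝ᵥ A *ᵥ (fun i ↦ (v i).im) := by
  simp only [reQuadForm, LinearMap.coe_mk, AddHom.coe_mk, dotProduct, mulVec, Pi.star_apply,
    map_apply, Finset.mul_sum, re_sum, mul_re, ofReal_re, ofReal_im, RCLike.star_def, conj_re,
    conj_im, mul_im, ← Finset.sum_add_distrib]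
  refine Finset.sum_congr rfl fun i _ ↦ Finset.sum_congr rfl fun j _ ↦ ?_
  ring

theorem PosSemidef.reQuadForm_nonneg {A : Matrix n n ℝ} (hA : A.PosSemidef) (v : n → ℂ) :
    0 ≤ reQuadForm v A := by
  rw [reQuadForm_eq]
  exact add_nonneg (hA.dotProduct_mulVec_nonneg _) (hA.dotProduct_mulVec_nonneg _)

end Matrix

theorem four_mul_mul_le_sq {b k d l m : ℝ} (hb : 0 ≤ b) (hm : 0 ≤ m)
    (hdm : 2 * b * m ≤ d) (hdl : 2 * k * l ≤ b * d) : 4 * k * l * m ≤ d ^ 2 := by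
  have hd : 0 ≤ d := (by positivity : 0 ≤ 2 * b * m).trans hdm
  calc 4 * k * l * m = 2 * m * (2 * k * l) := by ring
    _ ≤ 2 * m * (b * d) := by gcongr
    _ = (2 * b * m) * d := by ring
    _ ≤ d * d := by gcongr
    _ = d ^ 2 := (sq d).symm

theorem stmt_8_general {n : ℕ} (M D L : Matrix (Fin n) (Fin n) ℝ)
    (hM : M.PosDef)
    (β ζ : ℝ) (hβ : 0 < β)
    (h1 : (D - (2 * β) • M).PosSemidef)
    (h3 : (β • D - (2 * Real.cos ζ ^ 2) • L).PosSemidef)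
    (ν : Fin n → ℂ) :
    (star ν ⬝ᵥ (D.map (Complex.ofReal)).mulVec ν).re ^ 2
      - 4 * Real.cos ζ ^ 2 * (star ν ⬝ᵥ (L.map (Complex.ofReal)).mulVec ν).re
        * (star ν ⬝ᵥ (M.map (Complex.ofReal)).mulVec ν).re ≥ 0 := by
  have hm := hM.posSemidef.reQuadForm_nonneg ν
  have hdm := h1.reQuadForm_nonneg ν
  have hdl := h3.reQuadForm_nonneg ν
  simp only [map_sub, map_smul, smul_eq_mul, sub_nonneg] at hdm hdl
  exact sub_nonneg.2 (four_mul_mul_le_sq hβ.le hm hdm hdl)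

theorem stmt_8 {n : ℕ} (M D L : Matrix (Fin n) (Fin n) ℝ)
    (hM : M.PosDef) (hD : D.IsSymm) (hL : L.IsSymm)
    (β ζ : ℝ) (hβ : 0 < β) (hζ0 : 0 ≤ ζ) (hζ1 : ζ < Real.pi / 2)
    (h1 : (D - (2 * β) • M).PosSemidef) (h2 : L.PosSemidef)
    (h3 : (β • D - (2 * Real.cos ζ ^ 2) • L).PosSemidef)
    (lam : ℂ) (ν : Fin n → ℂ) (hν : ν ≠ 0)
    (hqep : (lam ^ 2 • M.map (Complex.ofReal) + lam • D.map (Complex.ofReal)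
        + L.map (Complex.ofReal)).mulVec ν = 0) :
    (star ν ⬝ᵥ (D.map (Complex.ofReal)).mulVec ν).re ^ 2
      - 4 * Real.cos ζ ^ 2 * (star ν ⬝ᵥ (L.map (Complex.ofReal)).mulVec ν).re
        * (star ν ⬝ᵥ (M.map (Complex.ofReal)).mulVec ν).re ≥ 0 :=
  stmt_8_general M D L hM β ζ hβ h1 h3 ν
end

section
/- Let M ≻ 0, D, L be real symmetric n×n matrices with L·1 = 0, β > 0, and suppose D − 2βM ⪰ 0 and L − βD + β²M + v·11^T ⪰ 0 for some v > 0. Then there is no real quadratic eigenvalue λ of (λ²M + λD + L)ν = 0 (ν ≠ 0) with −β < λ < 0, given additionally that 1^T D 1 > 0. -/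
open Matrix Complex

/-! With `λ̂ = λ + β`, the pencil `Q(λ) = λ²M + λD + L` equals
`λ̂²M + λ̂(D - 2βM) + (L - βD + β²M)`, which for `λ̂ > 0` is positive definite on the
hyperplane `1ᗮ` (there `vJ` contributes nothing), whereas `1ᵀQ(λ)1 = λ(λ1ᵀM1 + 1ᵀD1) < 0`
for `-2β < λ < 0`. A symmetric matrix that is positive definite on a hyperplane and negative
at its normal vector is nonsingular, so `Q(λ)` has no real, hence no complex, kernel vector. -/

namespace Matrix

variable {ι : Type*}

def quadraticPencil {R : Type*} [CommRing R] (M D L : Matrix ι ι R) (lam : R) : Matrix ι ι R :=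
  lam ^ 2 • M + lam • D + L

section CommRing

variable {R : Type*} [CommRing R]

lemma quadraticPencil_shift (M D L : Matrix ι ι R) (β lam : R) :
    quadraticPencil M D L lam =
      quadraticPencil M (D - (2 * β) • M) (L - β • D + β ^ 2 • M) (lam + β) := by
  unfold quadraticPencil
  module

lemma IsSymm.quadraticPencil {M D L : Matrix ι ι R} (hM : M.IsSymm) (hD : D.IsSymm)
    (hL : L.IsSymm) (lam : R) : (quadraticPencil M D L lam).IsSymm :=
  ((hM.smul _).add (hD.smul _)).add hL

lemma _root_.RingHom.map_quadraticPencil {S : Type*} [CommRing S] (f : R →+* S)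
    (M D L : Matrix ι ι R) (lam : R) :
    (quadraticPencil M D L lam).map f =
      quadraticPencil (M.map f) (D.map f) (L.map f) (f lam) := by
  ext i j
  simp [quadraticPencil]

end CommRing

variable [Fintype ι]

lemma IsSymm.dotProduct_mulVec_add_smul {R : Type*} [CommRing R] {A : Matrix ι ι R}
    (hA : A.IsSymm) {μ : ι → R} (hμ : A *ᵥ μ = 0) (x : ι → R) (t : R) :
    (x + t • μ) ⬝ᵥ A *ᵥ (x + t • μ) = x ⬝ᵥ A *ᵥ x := by
  have hμA : μ ᵥ* A = 0 := by rw [← mulVec_transpose, hA.eq, hμ]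
  rw [mulVec_add, mulVec_smul, hμ, smul_zero, add_zero, add_dotProduct, smul_dotProduct,
    dotProduct_mulVec μ, hμA, zero_dotProduct, smul_zero, add_zero]

lemma exists_mulVec_eq_zero_of_map_mulVec_eq_zero [DecidableEq ι] {K F : Type*} [Field K]
    [Field F] (f : K →+* F) (A : Matrix ι ι K) {ν : ι → F} (hν : ν ≠ 0)
    (h : A.map f *ᵥ ν = 0) : ∃ μ ≠ 0, A *ᵥ μ = 0 := by
  rw [exists_mulVec_eq_zero_iff]
  apply f.injective
  rw [f.map_det, map_zero]
  exact exists_mulVec_eq_zero_iff.mp ⟨ν, hν, h⟩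

lemma IsSymm.eq_zero_of_mulVec_eq_zero {K : Type*} [Field K] [Preorder K] {A : Matrix ι ι K}
    (hA : A.IsSymm) {w : ι → K} (hw : w ⬝ᵥ A *ᵥ w < 0)
    (hpos : ∀ x ≠ 0, w ⬝ᵥ x = 0 → 0 < x ⬝ᵥ A *ᵥ x) {μ : ι → K} (hμ : A *ᵥ μ = 0) :
    μ = 0 := by
  by_contra hμ0
  by_cases hwμ : w ⬝ᵥ μ = 0
  · have := hpos μ hμ0 hwμ
    rw [hμ, dotProduct_zero] at this
    exact this.false
  · -- moving `w` along the kernel direction into `w`'s orthogonal complement keeps the form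
    set x := w + (-(w ⬝ᵥ w) / (w ⬝ᵥ μ)) • μ
    have hq : x ⬝ᵥ A *ᵥ x = w ⬝ᵥ A *ᵥ w := hA.dotProduct_mulVec_add_smul hμ w _
    have hx : x ≠ 0 := by
      intro hx
      rw [hx, zero_dotProduct] at hq
      exact hw.ne hq.symm
    have hwx : w ⬝ᵥ x = 0 := by
      simp only [x, dotProduct_add, dotProduct_smul, smul_eq_mul]
      field_simp
      ring
    exact (hpos x hx hwx).not_gt (hq ▸ hw)

lemma PosSemidef.dotProduct_mulVec_nonneg_of_dotProduct_eq_zero {R : Type*} [CommRing R]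
    [PartialOrder R] [StarRing R] [TrivialStar R] {L : Matrix ι ι R} {w : ι → R} {v : R}
    (h : (L + v • vecMulVec w w).PosSemidef) {x : ι → R}
    (hx : w ⬝ᵥ x = 0) : 0 ≤ x ⬝ᵥ L *ᵥ x := by
  simpa [add_mulVec, smul_mulVec, vecMulVec_mulVec, hx] using h.dotProduct_mulVec_nonneg x

variable {K : Type*} [Field K] [LinearOrder K] [IsStrictOrderedRing K] [StarRing K]
  [TrivialStar K]

lemma PosDef.dotProduct_quadraticPencil_pos {M D L : Matrix ι ι K} (hM : M.PosDef)
    (hD : D.PosSemidef) {lam : K} (hlam : 0 < lam) {x : ι → K} (hx : x ≠ 0)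
    (hL : 0 ≤ x ⬝ᵥ L *ᵥ x) : 0 < x ⬝ᵥ quadraticPencil M D L lam *ᵥ x := by
  have hMx := hM.dotProduct_mulVec_pos hx
  have hDx := hD.dotProduct_mulVec_nonneg x
  rw [star_trivial] at hMx hDx
  simp only [quadraticPencil, add_mulVec, smul_mulVec, dotProduct_add, dotProduct_smul,
    smul_eq_mul]
  positivity

lemma PosDef.dotProduct_quadraticPencil_neg {M D L : Matrix ι ι K} (hM : M.PosDef) {β : K}
    (hDM : (D - (2 * β) • M).PosSemidef) {w : ι → K} (hw : w ≠ 0) (hLw : L *ᵥ w = 0)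
    {lam : K} (hlb : -(2 * β) < lam) (hub : lam < 0) :
    w ⬝ᵥ quadraticPencil M D L lam *ᵥ w < 0 := by
  have hMw := hM.dotProduct_mulVec_pos hw
  have hDw := hDM.dotProduct_mulVec_nonneg w
  rw [star_trivial] at hMw hDw
  have hsplit : w ⬝ᵥ quadraticPencil M D L lam *ᵥ w =
      lam * (lam + 2 * β) * (w ⬝ᵥ M *ᵥ w) +
        lam * (w ⬝ᵥ (D - (2 * β) • M) *ᵥ w) := by
    simp only [quadraticPencil, add_mulVec, sub_mulVec, smul_mulVec, hLw, dotProduct_add,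
      dotProduct_sub, dotProduct_smul, dotProduct_zero, smul_eq_mul]
    ring
  rw [hsplit]
  have hlam : lam * (lam + 2 * β) < 0 := mul_neg_of_neg_of_pos hub (by linarith)
  exact add_neg_of_neg_of_nonpos (mul_neg_of_neg_of_pos hlam hMw)
    (mul_nonpos_of_nonpos_of_nonneg hub.le hDw)

end Matrix

theorem stmt_13_general {n : ℕ} (M D L : Matrix (Fin n) (Fin n) ℝ)
    (hM : M.PosDef) (hD : D.IsSymm) (hL : L.IsSymm)
    (β v : ℝ)
    (hDM : (D - (2 * β) • M).PosSemidef)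
    (hL1 : L.mulVec (fun _ => (1:ℝ)) = 0)
    (hLv : (L - β • D + (β ^ 2) • M + v • (Matrix.of fun _ _ => (1:ℝ))).PosSemidef) :
    ¬ ∃ (lam : ℝ) (ν : Fin n → ℂ), -β < lam ∧ lam < 0 ∧ ν ≠ 0 ∧
      (((lam : ℂ)) ^ 2 • M.map (Complex.ofReal) + (lam : ℂ) • D.map (Complex.ofReal)
        + L.map (Complex.ofReal)).mulVec ν = 0 := by
  rintro ⟨lam, ν, hlb, hub, hν, heq⟩
  obtain ⟨μ, hμ0, hμ⟩ := exists_mulVec_eq_zero_of_map_mulVec_eq_zero ofRealHom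
    (quadraticPencil M D L lam) hν (by rw [ofRealHom.map_quadraticPencil]; exact heq)
  have hone : (fun _ => (1 : ℝ)) ≠ (0 : Fin n → ℝ) := by
    obtain ⟨i, -⟩ := Function.ne_iff.mp hμ0
    exact Function.ne_iff.mpr ⟨i, one_ne_zero⟩
  have hA : (quadraticPencil M D L lam).IsSymm :=
    (isHermitian_iff_isSymm.mp hM.isHermitian).quadraticPencil hD hL lam
  refine hμ0 (hA.eq_zero_of_mulVec_eq_zero
    (hM.dotProduct_quadraticPencil_neg hDM hone hL1 (by linarith) hub) (fun x hx hx1 => ?_) hμ)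
  rw [quadraticPencil_shift M D L β lam]
  refine hM.dotProduct_quadraticPencil_pos hDM (by linarith) hx ?_
  have hJ : (of fun _ _ => (1 : ℝ) : Matrix (Fin n) (Fin n) ℝ) =
      vecMulVec (fun _ => 1) (fun _ => 1) := by
    ext
    simp [vecMulVec_apply]
  rw [hJ] at hLv
  exact hLv.dotProduct_mulVec_nonneg_of_dotProduct_eq_zero hx1

theorem stmt_13 {n : ℕ} (M D L : Matrix (Fin n) (Fin n) ℝ)
    (hM : M.PosDef) (hD : D.IsSymm) (hL : L.IsSymm)
    (β v : ℝ) (hβ : 0 < β) (hv : 0 < v)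
    (hDM : (D - (2 * β) • M).PosSemidef)
    (hL1 : L.mulVec (fun _ => (1:ℝ)) = 0)
    (hLv : (L - β • D + (β ^ 2) • M + v • (Matrix.of fun _ _ => (1:ℝ))).PosSemidef)
    (hD1 : 0 < (fun _ => (1:ℝ)) ⬝ᵥ D.mulVec (fun _ => (1:ℝ))) :
    ¬ ∃ (lam : ℝ) (ν : Fin n → ℂ), -β < lam ∧ lam < 0 ∧ ν ≠ 0 ∧
      (((lam : ℂ)) ^ 2 • M.map (Complex.ofReal) + (lam : ℂ) • D.map (Complex.ofReal)
        + L.map (Complex.ofReal)).mulVec ν = 0 :=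
  stmt_13_general M D L hM hD hL β v hDM hL1 hLv
end
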